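/- arXiv:2604.13238 — 5 statements merged into one kernel-verified Lean document; each statement's English description precedes it below -/
import Mathlib

section
/- The map (x,y) ↦ ab - ax - by is a bijection from the set {(x,y) ∈ ℤ≥1 × ℤ≥1 : ab - ax - by > 0} to the set of gaps of the numerical semigroup generated by a and b (i.e., positive integers not representable as a nonnegative integer combination of a and b). -/
/-!
Every integer can be written `a * s + b * t` with `0 ≤ t < a`; a positive one with `s ≥ 0` is
representable, so a gap has `s < 0` and equals `ab - ax - by` with `x = -s`, `y = a - t`.
Conversely, `ab - ax - by = pa + qb` would give `a(x + p) + b(y + q) = ab`, impossible for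
coprime `a, b` since then `b ∣ x + p`. Injectivity: two preimages have `x ≡ x' [ZMOD b]` with
both in `[1, b)`.
-/

namespace IsCoprime

variable {a b : ℤ}

theorem exists_eq_mul_add_mul_of_lt (hab : IsCoprime a b) (ha : 0 < a) (m : ℤ) :
    ∃ s t : ℤ, 0 ≤ t ∧ t < a ∧ m = a * s + b * t := by
  obtain ⟨u, v, huv⟩ := hab
  refine ⟨m * u + b * (m * v / a), m * v % a, Int.emod_nonneg _ ha.ne', Int.emod_lt_of_pos _ ha,
    ?_⟩
  linear_combination (-m) * huv - b * Int.mul_ediv_add_emod (m * v) a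

theorem mul_add_mul_ne_mul {s t : ℤ} (hab : IsCoprime a b) (ha : 0 < a) (hb : 0 < b)
    (hs : 0 < s) (ht : 0 < t) : a * s + b * t ≠ a * b := by
  intro h
  have hbs : b ∣ s := hab.symm.dvd_of_dvd_mul_left ⟨a - t, by linear_combination h⟩
  nlinarith [Int.le_of_dvd hs hbs]

theorem eq_of_mul_add_mul_eq {x y x' y' : ℤ} (hab : IsCoprime a b)
    (hx : 0 ≤ x) (hxb : x < b) (hx' : 0 ≤ x') (hx'b : x' < b)
    (h : a * x + b * y = a * x' + b * y') : x = x' ∧ y = y' := by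
  have hdvd : b ∣ x - x' := hab.symm.dvd_of_dvd_mul_left ⟨y' - y, by linear_combination h⟩
  obtain rfl : x = x' := sub_eq_zero.mp <|
    Int.eq_zero_of_abs_lt_dvd hdvd (abs_sub_lt_of_nonneg_of_lt hx hxb hx' hx'b)
  exact ⟨rfl, mul_left_cancel₀ (by omega : b ≠ 0) (by linarith)⟩

end IsCoprime

/-- The map (x,y) ↦ ab - ax - by is a bijection from
{(x,y) ∈ ℤ≥1² : ab - ax - by > 0} to the gap set of ⟨a,b⟩. -/
theorem stmt0 (a b : ℤ) (ha : 1 < a) (hab : a < b) (hcop : IsCoprime a b) :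
    Set.BijOn (fun p : ℤ × ℤ => a * b - a * p.1 - b * p.2)
      {p : ℤ × ℤ | 1 ≤ p.1 ∧ 1 ≤ p.2 ∧ 0 < a * b - a * p.1 - b * p.2}
      {m : ℤ | 0 < m ∧ ¬∃ x y : ℕ, m = (x : ℤ) * a + (y : ℤ) * b} := by
  have ha0 : 0 < a := by omega
  have hb0 : 0 < b := by omega
  refine ⟨?mapsTo, ?injOn, ?surjOn⟩
  case mapsTo =>
    rintro ⟨x, y⟩ ⟨hx, hy, hm⟩
    refine ⟨hm, fun ⟨p, q, hpq⟩ => hcop.mul_add_mul_ne_mul ha0 hb0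
      (s := x + p) (t := y + q) (by positivity) (by positivity) (by linear_combination -hpq)⟩
  case injOn =>
    rintro ⟨x, y⟩ ⟨hx, hy, hm⟩ ⟨x', y'⟩ ⟨hx', hy', hm'⟩ h
    simp only at hx hy hm hx' hy' hm' h
    obtain ⟨rfl, rfl⟩ := hcop.eq_of_mul_add_mul_eq (x := x) (y := y) (x' := x') (y' := y')
      (by omega) (by nlinarith) (by omega) (by nlinarith) (by linear_combination -h)
    rfl
  case surjOn =>
    rintro m ⟨hm, hgap⟩
    obtain ⟨s, t, ht, hta, rfl⟩ := hcop.exists_eq_mul_add_mul_of_lt ha0 m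
    have hs : s < 0 := by
      by_contra! hs
      lift s to ℕ using hs
      lift t to ℕ using ht
      exact hgap ⟨s, t, by ring⟩
    exact ⟨(-s, a - t), ⟨by omega, by omega, by linarith⟩, by ring⟩
end

section
/- Let c ∈ G and let r be an integer with 1 ≤ r ≤ row(c). Then the projection proj_r(c), defined as the unique cell j in row r with 0 ≤ g(j) - g(c) < a, lies in G. -/
def g (a b : ℤ) (p : ℤ × ℤ) : ℤ := a * b - a * p.1 - b * p.2

def Gset (a b : ℤ) : Set (ℤ × ℤ) := {p | 1 ≤ p.1 ∧ 1 ≤ p.2 ∧ 0 < g a b p}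

lemma g_sub_g (a b : ℤ) (p q : ℤ × ℤ) :
    g a b p - g a b q = a * (q.1 - p.1) + b * (q.2 - p.2) := by
  simp only [g]; ring

theorem stmt2_general (a b : ℤ) (ha : 1 < a) (hab : a < b)
    (c : ℤ × ℤ) (hc : c ∈ Gset a b) (r : ℤ) (hr1 : 1 ≤ r) (hr2 : r ≤ c.2)
    (j : ℤ × ℤ) (hj : j.2 = r)
    (h1 : 0 ≤ g a b j - g a b c) (h2 : g a b j - g a b c < a) :
    j ∈ Gset a b := by
  obtain ⟨hc1, -, hgc⟩ := hc
  -- `a * (c.1 - j.1) + b * (c.2 - r) < a` with the second term `≥ 0` gives `j.1 > c.1 - 1 ≥ 0`.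
  have hdown : 0 ≤ b * (c.2 - r) := mul_nonneg (by linarith) (by linarith)
  have hcol : 0 < a * j.1 := by
    rw [g_sub_g, hj] at h2
    nlinarith
  exact ⟨pos_of_mul_pos_right hcol (by linarith), hj ▸ hr1, by linarith⟩

/-- If c ∈ G and 1 ≤ r ≤ row(c), then the projection of c to row r
(the unique cell j in row r with 0 ≤ g(j) - g(c) < a) lies in G. -/
theorem stmt2 (a b : ℤ) (ha : 1 < a) (hab : a < b) (hcop : IsCoprime a b)
    (c : ℤ × ℤ) (hc : c ∈ Gset a b) (r : ℤ) (hr1 : 1 ≤ r) (hr2 : r ≤ c.2)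
    (j : ℤ × ℤ) (hj : j.2 = r)
    (h1 : 0 ≤ g a b j - g a b c) (h2 : g a b j - g a b c < a) :
    j ∈ Gset a b :=
  stmt2_general a b ha hab c hc r hr1 hr2 j hj h1 h2
end

section
/- For any cell i ∈ D, there is exactly one cell j in the bottom row B = ℤ≥1 × {1} with 0 ≤ g(j) − g(i) < a; consequently #{(i,j) ∈ D × B : 0 ≤ g(j) − g(i) < a} = |D| for any finite D ⊆ G. -/
/-!
For `j` in the bottom row, `g(j) - g(i) = a (i₁ - j₁) + b (i₂ - 1)`, so the condition
`0 ≤ g(j) - g(i) < a` says exactly that `j₁ - i₁` is the quotient and `g(j) - g(i)` the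
remainder of `b (i₂ - 1)` on division by `a`; as `b > 0` the quotient is `≥ 0`, so `j₁ ≥ 1`. Hence `i ↦ (i₁ + b (i₂ - 1) / a, 1)` is the
unique such cell, and the pairs being counted form the graph of this map over `D`.
-/

def bottomProj (a b : ℤ) (i : ℤ × ℤ) : ℤ × ℤ := (i.1 + b * (i.2 - 1) / a, 1)

lemma g_sub_g_of_snd_eq_one (a b : ℤ) {i j : ℤ × ℤ} (hj : j.2 = 1) :
    g a b j - g a b i = a * (i.1 - j.1) + b * (i.2 - 1) := by
  simp only [g, hj]
  ring

lemma window_iff_eq_bottomProj {a : ℤ} (b : ℤ) (ha : 0 < a) (i j : ℤ × ℤ) :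
    (j.2 = 1 ∧ 0 ≤ g a b j - g a b i ∧ g a b j - g a b i < a) ↔ j = bottomProj a b i := by
  constructor
  · rintro ⟨hj, h0, hlt⟩
    rw [g_sub_g_of_snd_eq_one a b hj] at h0 hlt
    have hq : b * (i.2 - 1) / a = j.1 - i.1 :=
      ((Int.ediv_emod_unique ha).2 ⟨by ring, h0, hlt⟩).1
    ext
    · simp only [bottomProj, hq]
      ring
    · exact hj
  · rintro rfl
    have hrem : g a b (bottomProj a b i) - g a b i = b * (i.2 - 1) % a := by
      rw [g_sub_g_of_snd_eq_one a b rfl, Int.emod_def]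
      simp only [bottomProj]
      ring
    rw [hrem]
    exact ⟨rfl, Int.emod_nonneg _ ha.ne', Int.emod_lt_of_pos _ ha⟩

lemma one_le_bottomProj_fst {a b : ℤ} (ha : 0 < a) (hb : 0 ≤ b) {i : ℤ × ℤ}
    (hi₁ : 1 ≤ i.1) (hi₂ : 1 ≤ i.2) : 1 ≤ (bottomProj a b i).1 := by
  have : 0 ≤ b * (i.2 - 1) / a := Int.ediv_nonneg (by nlinarith) ha.le
  simp only [bottomProj]
  omega

lemma bottomRow_window_iff_eq_bottomProj {a b : ℤ} (ha : 0 < a) (hb : 0 ≤ b) {i : ℤ × ℤ}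
    (hi₁ : 1 ≤ i.1) (hi₂ : 1 ≤ i.2) (j : ℤ × ℤ) :
    ((1 ≤ j.1 ∧ j.2 = 1) ∧ 0 ≤ g a b j - g a b i ∧ g a b j - g a b i < a) ↔
      j = bottomProj a b i := by
  constructor
  · rintro ⟨⟨-, hj⟩, hwin⟩
    exact (window_iff_eq_bottomProj b ha i j).1 ⟨hj, hwin⟩
  · rintro rfl
    exact ⟨⟨one_le_bottomProj_fst ha hb hi₁ hi₂, rfl⟩,
      ((window_iff_eq_bottomProj b ha i _).2 rfl).2⟩

theorem stmt5_general (a b : ℤ) (ha : 1 < a) (hab : a < b)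
    (D : Set (ℤ × ℤ)) (hD : D ⊆ Gset a b) :
    (∀ i ∈ D, ∃! j : ℤ × ℤ, (1 ≤ j.1 ∧ j.2 = 1) ∧
      0 ≤ g a b j - g a b i ∧ g a b j - g a b i < a) ∧
    Set.ncard {p : (ℤ × ℤ) × (ℤ × ℤ) | p.1 ∈ D ∧ (1 ≤ p.2.1 ∧ p.2.2 = 1) ∧
      0 ≤ g a b p.2 - g a b p.1 ∧ g a b p.2 - g a b p.1 < a} = D.ncard := by
  have hwin : ∀ i ∈ D, ∀ j : ℤ × ℤ, ((1 ≤ j.1 ∧ j.2 = 1) ∧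
      0 ≤ g a b j - g a b i ∧ g a b j - g a b i < a) ↔ j = bottomProj a b i :=
    fun i hi => bottomRow_window_iff_eq_bottomProj (by linarith) (by linarith)
      (hD hi).1 (hD hi).2.1
  refine ⟨fun i hi => ⟨bottomProj a b i, (hwin i hi _).2 rfl, fun j hj => (hwin i hi j).1 hj⟩, ?_⟩
  have hgraph : {p : (ℤ × ℤ) × (ℤ × ℤ) | p.1 ∈ D ∧ (1 ≤ p.2.1 ∧ p.2.2 = 1) ∧
      0 ≤ g a b p.2 - g a b p.1 ∧ g a b p.2 - g a b p.1 < a} =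
      (fun i => (i, bottomProj a b i)) '' D := by
    ext ⟨i, j⟩
    simp only [Set.mem_ofPred_eq, Set.mem_image, Prod.mk.injEq]
    constructor
    · rintro ⟨hi, hj⟩
      exact ⟨i, hi, rfl, ((hwin i hi j).1 hj).symm⟩
    · rintro ⟨i, hi, rfl, rfl⟩
      exact ⟨hi, (hwin i hi _).2 rfl⟩
  rw [hgraph, Set.ncard_image_of_injective D fun x y h => congrArg Prod.fst h]

/-- each i ∈ D projects to a unique cell of the bottom row
B = ℤ≥1 × {1}, so #\{(i,j) ∈ D × B : 0 ≤ g(j) − g(i) < a\} = |D|. -/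
theorem stmt5 (a b : ℤ) (ha : 1 < a) (hab : a < b) (hcop : IsCoprime a b)
    (D : Set (ℤ × ℤ)) (hD : D ⊆ Gset a b) (hfin : D.Finite) :
    (∀ i ∈ D, ∃! j : ℤ × ℤ, (1 ≤ j.1 ∧ j.2 = 1) ∧
      0 ≤ g a b j - g a b i ∧ g a b j - g a b i < a) ∧
    Set.ncard {p : (ℤ × ℤ) × (ℤ × ℤ) | p.1 ∈ D ∧ (1 ≤ p.2.1 ∧ p.2.2 = 1) ∧
      0 ≤ g a b p.2 - g a b p.1 ∧ g a b p.2 - g a b p.1 < a} = D.ncard :=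
  stmt5_general a b ha hab D hD
end

section
/- For any subdiagram D ⊆ G, Q(1_D) = dinv(D), where dinv(D) = #{c ∈ D : leg_D(c)/(arm_D(c)+1) < a/b < (leg_D(c)+1)/arm_D(c)} (upper inequality automatic when arm_D(c)=0). Moreover if D ≠ ∅ then Q(1_D) > 0. -/
open scoped BigOperators Classical


def IsSubdiagram (a b : ℤ) (D : Set (ℤ × ℤ)) : Prop :=
  D ⊆ Gset a b ∧ ∀ p ∈ D, ∀ q ∈ Gset a b, q.1 ≤ p.1 → q.2 ≤ p.2 → q ∈ D

def U (D : Set (ℤ × ℤ)) : Set (ℤ × ℤ) :=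
  {p | p ∉ D ∧ ((p.1, p.2 - 1) ∈ D ∨ (1 ≤ p.1 ∧ p.2 - 1 ≤ 0))}

/-- arm_D(c) = max {k : c − ka ∈ D}, where a acts as the vector (−1,0). -/
noncomputable def arm (D : Set (ℤ × ℤ)) (c : ℤ × ℤ) : ℕ :=
  sSup {k : ℕ | (c.1 + (k : ℤ), c.2) ∈ D}

/-- leg_D(c) = max {k : c − kb ∈ D}, where b acts as the vector (0,−1). -/
noncomputable def leg (D : Set (ℤ × ℤ)) (c : ℤ × ℤ) : ℕ :=
  sSup {k : ℕ | (c.1, c.2 + (k : ℤ)) ∈ D}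

noncomputable def Q (a b : ℤ) (n : ℤ × ℤ → ℝ) : ℝ :=
  ∑ᶠ i ∈ Gset a b, ∑ᶠ j ∈ Gset a b,
    ((if 0 ≤ g a b j - g a b i ∧ g a b j - g a b i < a then (1 : ℝ) else 0) -
      (if b ≤ g a b j - g a b i ∧ g a b j - g a b i < a + b then (1 : ℝ) else 0)) *
      n i * n j

noncomputable def RR (D : Set (ℤ × ℤ)) (y : ℤ) : ℤ := (arm D (0, y) : ℤ)
noncomputable def HH (D : Set (ℤ × ℤ)) (x : ℤ) : ℤ := (leg D (x, 0) : ℤ)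

section basics

variable {a b : ℤ} {D : Set (ℤ × ℤ)}

lemma x_lt_b (ha : 1 < a) (hab : a < b) {p : ℤ × ℤ} (hp : p ∈ Gset a b) : p.1 ≤ b - 1 := by
  obtain ⟨h1, h2, h3⟩ := hp
  unfold g at h3
  nlinarith

lemma y_lt_a (ha : 1 < a) (hab : a < b) {p : ℤ × ℤ} (hp : p ∈ Gset a b) : p.2 ≤ a - 1 := by
  obtain ⟨h1, h2, h3⟩ := hp
  unfold g at h3
  nlinarith

lemma Gset_finite (ha : 1 < a) (hab : a < b) : (Gset a b).Finite := by
  apply Set.Finite.subset (Set.finite_Icc ((1 : ℤ), (1 : ℤ)) (b, a))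
  intro p hp
  refine Set.mem_Icc.2 ⟨⟨hp.1, hp.2.1⟩, ⟨?_, ?_⟩⟩
  · have := x_lt_b ha hab hp; omega
  · have := y_lt_a ha hab hp; omega

lemma closed (hD : IsSubdiagram a b D) (ha : 1 < a) (hab : a < b) {x y x' y' : ℤ}
    (hxy : (x, y) ∈ D) (h1 : 1 ≤ x') (h2 : x' ≤ x) (h3 : 1 ≤ y') (h4 : y' ≤ y) :
    (x', y') ∈ D := by
  refine hD.2 _ hxy (x', y') ⟨h1, h3, ?_⟩ h2 h4
  have h5 := (hD.1 hxy).2.2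
  unfold g at h5 ⊢
  simp only at h5 ⊢
  nlinarith

lemma RR_def (D : Set (ℤ × ℤ)) (y : ℤ) :
    RR D y = ((sSup {k : ℕ | ((k : ℤ), y) ∈ D} : ℕ) : ℤ) := by
  unfold RR arm; norm_num

lemma HH_def (D : Set (ℤ × ℤ)) (x : ℤ) :
    HH D x = ((sSup {k : ℕ | (x, (k : ℤ)) ∈ D} : ℕ) : ℤ) := by
  unfold HH leg; norm_num

lemma mem_row (hD : IsSubdiagram a b D) (ha : 1 < a) (hab : a < b) (c : ℤ × ℤ) :
    c ∈ D ↔ 1 ≤ c.1 ∧ c.1 ≤ RR D c.2 := by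
  have hbdd : BddAbove {k : ℕ | ((k : ℤ), c.2) ∈ D} := by
    refine ⟨b.toNat, fun k hk => ?_⟩
    have := x_lt_b ha hab (hD.1 hk)
    simp only at this
    omega
  rw [RR_def]
  constructor
  · intro hc
    have h1 : 1 ≤ c.1 := (hD.1 hc).1
    have hmem : c.1.toNat ∈ {k : ℕ | ((k : ℤ), c.2) ∈ D} := by
      simp only [Set.mem_setOf_eq, Int.toNat_of_nonneg (by omega : (0:ℤ) ≤ c.1)]
      exact (Prod.mk.eta (p := c)) ▸ hc
    have := le_csSup hbdd hmem
    refine ⟨h1, by omega⟩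
  · rintro ⟨h1, h2⟩
    have hne : {k : ℕ | ((k : ℤ), c.2) ∈ D}.Nonempty := by
      by_contra hemp
      rw [Set.not_nonempty_iff_eq_empty] at hemp
      rw [hemp] at h2
      simp [csSup_empty] at h2
      omega
    have hsup := Nat.sSup_mem hne hbdd
    simp only [Set.mem_setOf_eq] at hsup
    have hy : 1 ≤ c.2 := (hD.1 hsup).2.1
    have := closed hD ha hab hsup h1 h2 hy (le_refl c.2)
    rwa [Prod.mk.eta] at this

lemma mem_col (hD : IsSubdiagram a b D) (ha : 1 < a) (hab : a < b) (c : ℤ × ℤ) :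
    c ∈ D ↔ 1 ≤ c.2 ∧ c.2 ≤ HH D c.1 := by
  have hbdd : BddAbove {k : ℕ | (c.1, (k : ℤ)) ∈ D} := by
    refine ⟨a.toNat, fun k hk => ?_⟩
    have := y_lt_a ha hab (hD.1 hk)
    simp only at this
    omega
  rw [HH_def]
  constructor
  · intro hc
    have h1 : 1 ≤ c.2 := (hD.1 hc).2.1
    have hmem : c.2.toNat ∈ {k : ℕ | (c.1, (k : ℤ)) ∈ D} := by
      simp only [Set.mem_setOf_eq, Int.toNat_of_nonneg (by omega : (0:ℤ) ≤ c.2)]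
      exact (Prod.mk.eta (p := c)) ▸ hc
    have := le_csSup hbdd hmem
    refine ⟨h1, by omega⟩
  · rintro ⟨h1, h2⟩
    have hne : {k : ℕ | (c.1, (k : ℤ)) ∈ D}.Nonempty := by
      by_contra hemp
      rw [Set.not_nonempty_iff_eq_empty] at hemp
      rw [hemp] at h2
      simp [csSup_empty] at h2
      omega
    have hsup := Nat.sSup_mem hne hbdd
    simp only [Set.mem_setOf_eq] at hsup
    have hx : 1 ≤ c.1 := (hD.1 hsup).1
    have := closed hD ha hab hsup hx (le_refl c.1) h1 h2
    rwa [Prod.mk.eta] at this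

lemma RR_nonneg (D : Set (ℤ × ℤ)) (y : ℤ) : 0 ≤ RR D y := Int.natCast_nonneg _
lemma HH_nonneg (D : Set (ℤ × ℤ)) (x : ℤ) : 0 ≤ HH D x := Int.natCast_nonneg _

lemma RR_le (hD : IsSubdiagram a b D) (ha : 1 < a) (hab : a < b) (y : ℤ) :
    RR D y ≤ b - 1 := by
  rcases le_or_gt (RR D y) 0 with h | h
  · omega
  · have : (RR D y, y) ∈ D := (mem_row hD ha hab (RR D y, y)).2 ⟨by omega, le_refl _⟩
    have := x_lt_b ha hab (hD.1 this)
    simpa using this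

lemma HH_le (hD : IsSubdiagram a b D) (ha : 1 < a) (hab : a < b) (x : ℤ) :
    HH D x ≤ a - 1 := by
  rcases le_or_gt (HH D x) 0 with h | h
  · omega
  · have : (x, HH D x) ∈ D := (mem_col hD ha hab (x, HH D x)).2 ⟨by omega, le_refl _⟩
    have := y_lt_a ha hab (hD.1 this)
    simpa using this

lemma arm_eq (hD : IsSubdiagram a b D) (ha : 1 < a) (hab : a < b) {c : ℤ × ℤ}
    (hc : c ∈ D) : (arm D c : ℤ) = RR D c.2 - c.1 := by
  have hx := (mem_row hD ha hab c).1 hc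
  have hbdd : BddAbove {k : ℕ | (c.1 + (k : ℤ), c.2) ∈ D} := by
    refine ⟨b.toNat, fun k hk => ?_⟩
    have := x_lt_b ha hab (hD.1 hk)
    simp only at this
    omega
  have hne : (0 : ℕ) ∈ {k : ℕ | (c.1 + (k : ℤ), c.2) ∈ D} := by
    simp only [Set.mem_setOf_eq, Int.natCast_zero, add_zero, Prod.mk.eta]
    exact hc
  have hle : arm D c ≤ (RR D c.2 - c.1).toNat := by
    apply csSup_le ⟨0, hne⟩
    intro k hk
    have := ((mem_row hD ha hab (c.1 + (k : ℤ), c.2)).1 hk).2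
    simp only at this
    omega
  have hge : (RR D c.2 - c.1).toNat ≤ arm D c := by
    apply le_csSup hbdd
    simp only [Set.mem_setOf_eq]
    have h1 : c.1 + ((RR D c.2 - c.1).toNat : ℤ) = RR D c.2 := by omega
    rw [h1]
    exact (mem_row hD ha hab (RR D c.2, c.2)).2 ⟨by omega, le_refl _⟩
  have h2 : arm D c = (RR D c.2 - c.1).toNat := le_antisymm hle hge
  rw [h2]
  omega

lemma leg_eq (hD : IsSubdiagram a b D) (ha : 1 < a) (hab : a < b) {c : ℤ × ℤ}
    (hc : c ∈ D) : (leg D c : ℤ) = HH D c.1 - c.2 := by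
  have hx := (mem_col hD ha hab c).1 hc
  have hbdd : BddAbove {k : ℕ | (c.1, c.2 + (k : ℤ)) ∈ D} := by
    refine ⟨a.toNat, fun k hk => ?_⟩
    have := y_lt_a ha hab (hD.1 hk)
    simp only at this
    omega
  have hne : (0 : ℕ) ∈ {k : ℕ | (c.1, c.2 + (k : ℤ)) ∈ D} := by
    simp only [Set.mem_setOf_eq, Int.natCast_zero, add_zero, Prod.mk.eta]
    exact hc
  have hle : leg D c ≤ (HH D c.1 - c.2).toNat := by
    apply csSup_le ⟨0, hne⟩
    intro k hk
    have := ((mem_col hD ha hab (c.1, c.2 + (k : ℤ))).1 hk).2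
    simp only at this
    omega
  have hge : (HH D c.1 - c.2).toNat ≤ leg D c := by
    apply le_csSup hbdd
    simp only [Set.mem_setOf_eq]
    have h1 : c.2 + ((HH D c.1 - c.2).toNat : ℤ) = HH D c.1 := by omega
    rw [h1]
    exact (mem_col hD ha hab (c.1, HH D c.1)).2 ⟨by omega, le_refl _⟩
  have h2 : leg D c = (HH D c.1 - c.2).toNat := le_antisymm hle hge
  rw [h2]
  omega

end basics

section main

variable {a b : ℤ} {D : Set (ℤ × ℤ)}

lemma qbounds (ha : 1 < a) (hb : 1 < b) (hcop : IsCoprime a b) {l : ℤ}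
    (h1 : 1 ≤ l) (h2 : l < a) :
    a * (b * l / a + 1 - 1) < b * l ∧ b * l < a * (b * l / a + 1) := by
  have ha0 : (0 : ℤ) < a := by omega
  have hmod := Int.emod_nonneg (b * l) (by omega : a ≠ 0)
  have hmod2 := Int.emod_lt_of_pos (b * l) ha0
  have hdm := Int.mul_ediv_add_emod (b * l) a
  have hne : b * l % a ≠ 0 := by
    intro h
    have hdvd : a ∣ b * l := Int.dvd_of_emod_eq_zero h
    have : a ∣ l := (IsCoprime.dvd_of_dvd_mul_left hcop hdvd)
    have := Int.le_of_dvd (by omega) this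
    omega
  have hpos : 0 < b * l % a := lt_of_le_of_ne hmod (Ne.symm hne)
  constructor <;> [linarith [hdm, hpos]; linarith [hdm, hmod2]]

lemma star (hD : IsSubdiagram a b D) (ha : 1 < a) (hab : a < b)
    (DF : Finset (ℤ × ℤ)) (hDF : ∀ c, c ∈ DF ↔ c ∈ D) (u : ℤ → ℤ) :
    ∑ i ∈ DF, u (g a b i) + ∑ x ∈ Finset.Icc (1 : ℤ) (RR D 1), u (a * b - a * x)
      = ∑ i ∈ DF, u (g a b i + b)
        + ∑ x ∈ Finset.Icc (1 : ℤ) (RR D 1), u (a * b - a * x - b * HH D x) := by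
  classical
  have hcol1 : ∀ x : ℤ, (1 ≤ x ∧ x ≤ RR D 1) ↔ 1 ≤ HH D x := by
    intro x
    rw [← mem_row hD ha hab (x, 1), mem_col hD ha hab (x, 1)]
    simp
  set DFd : Finset (ℤ × ℤ) := DF.image (fun c => (c.1, c.2 - 1)) with hDFd
  set Bot : Finset (ℤ × ℤ) := (Finset.Icc (1 : ℤ) (RR D 1)).image (fun x => (x, (0 : ℤ)))
    with hBot
  set Top : Finset (ℤ × ℤ) := (Finset.Icc (1 : ℤ) (RR D 1)).image (fun x => (x, HH D x))
    with hTop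
  have hmemDFd : ∀ c : ℤ × ℤ, c ∈ DFd ↔ (c.1, c.2 + 1) ∈ D := by
    rintro ⟨x, y⟩
    simp only [hDFd, Finset.mem_image, Prod.mk.injEq, Prod.ext_iff]
    constructor
    · rintro ⟨⟨cx, cy⟩, hc, h1, h2⟩
      simp only at h1 h2 ⊢
      rw [hDF] at hc
      have h3 : (cx, cy) = (x, y + 1) := by rw [Prod.ext_iff]; constructor <;> simp <;> omega
      rwa [h3] at hc
    · intro h
      exact ⟨(x, y + 1), (hDF _).2 h, rfl, by simp⟩
  have hmemBot : ∀ x y : ℤ, (x, y) ∈ Bot ↔ (1 ≤ x ∧ x ≤ RR D 1) ∧ y = 0 := by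
    intro x y
    simp only [hBot, Finset.mem_image, Finset.mem_Icc, Prod.mk.injEq]
    constructor
    · rintro ⟨x', hx', rfl, h⟩; exact ⟨hx', h.symm⟩
    · rintro ⟨hx, rfl⟩; exact ⟨x, hx, rfl, rfl⟩
  have hmemTop : ∀ x y : ℤ, (x, y) ∈ Top ↔ (1 ≤ x ∧ x ≤ RR D 1) ∧ y = HH D x := by
    intro x y
    simp only [hTop, Finset.mem_image, Finset.mem_Icc, Prod.mk.injEq]
    constructor
    · rintro ⟨x', hx', rfl, h⟩; exact ⟨hx', h.symm⟩
    · rintro ⟨hx, rfl⟩; exact ⟨x, hx, rfl, rfl⟩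
  have hshift : ∑ i ∈ DF, u (g a b i + b) = ∑ i ∈ DFd, u (g a b i) := by
    rw [hDFd, Finset.sum_image]
    · apply Finset.sum_congr rfl
      intro c _
      congr 1
      unfold g
      simp only
      ring
    · intro c1 _ c2 _ h
      rw [Prod.ext_iff] at h ⊢
      obtain ⟨h1, h2⟩ := h
      simp only at h1 h2
      exact ⟨h1, by omega⟩
  have hsumBot : ∑ x ∈ Finset.Icc (1 : ℤ) (RR D 1), u (a * b - a * x)
      = ∑ c ∈ Bot, u (g a b c) := by
    rw [hBot, Finset.sum_image (by intro x _ y _ h; simpa using (Prod.ext_iff.1 h).1)]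
    apply Finset.sum_congr rfl
    intro x _
    congr 1
    simp [g]
  have hsumTop : ∑ x ∈ Finset.Icc (1 : ℤ) (RR D 1), u (a * b - a * x - b * HH D x)
      = ∑ c ∈ Top, u (g a b c) := by
    rw [hTop, Finset.sum_image (by intro x _ y _ h; simpa using (Prod.ext_iff.1 h).1)]
    apply Finset.sum_congr rfl
    intro x _
    congr 1
  have hdisj1 : Disjoint DF Bot := by
    rw [Finset.disjoint_left]
    rintro ⟨x, y⟩ hc hcB
    rw [hDF] at hc
    have h1 : 1 ≤ y := ((mem_col hD ha hab (x, y)).1 hc).1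
    rw [hmemBot] at hcB
    omega
  have hdisj2 : Disjoint DFd Top := by
    rw [Finset.disjoint_left]
    rintro ⟨x, y⟩ hc hcT
    rw [hmemDFd] at hc
    have h1 : y + 1 ≤ HH D x := ((mem_col hD ha hab (x, y + 1)).1 hc).2
    rw [hmemTop] at hcT
    omega
  have hunion : DF ∪ Bot = DFd ∪ Top := by
    ext ⟨x, y⟩
    simp only [Finset.mem_union, hDF, hmemDFd, hmemBot, hmemTop,
      mem_col hD ha hab (x, y), mem_col hD ha hab (x, y + 1)]
    have hc := hcol1 x
    have hH := HH_nonneg D x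
    omega
  calc ∑ i ∈ DF, u (g a b i) + ∑ x ∈ Finset.Icc (1 : ℤ) (RR D 1), u (a * b - a * x)
      = ∑ c ∈ DF ∪ Bot, u (g a b c) := by rw [hsumBot, Finset.sum_union hdisj1]
    _ = ∑ c ∈ DFd ∪ Top, u (g a b c) := by rw [hunion]
    _ = ∑ i ∈ DF, u (g a b i + b)
        + ∑ x ∈ Finset.Icc (1 : ℤ) (RR D 1), u (a * b - a * x - b * HH D x) := by
        rw [Finset.sum_union hdisj2, hshift, hsumTop]

lemma Mlemma (hD : IsSubdiagram a b D) (ha : 1 < a) (hab : a < b)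
    (DF : Finset (ℤ × ℤ)) (hDF : ∀ c, c ∈ DF ↔ c ∈ D) (t : ℤ) :
    (DF.filter (fun j => t ≤ g a b j ∧ g a b j < t + a)).card
      = ((Finset.Icc (1 : ℤ) (a - 1)).filter
          (fun y => a * b - a * (RR D y + 1) - b * y < t ∧ t ≤ a * b - a - b * y)).card := by
  classical
  have ha0 : (0 : ℤ) < a := by omega
  apply Finset.card_nbij' (fun c => c.2) (fun y => ((a * b - a - b * y - t) / a + 1, y))
  · intro c hc
    rw [Finset.mem_coe, Finset.mem_filter] at hc
    obtain ⟨hcD, h1, h2⟩ := hc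
    rw [hDF] at hcD
    obtain ⟨hx1, hx2⟩ := (mem_row hD ha hab c).1 hcD
    have hy1 : 1 ≤ c.2 := ((mem_col hD ha hab c).1 hcD).1
    have hy2 : c.2 ≤ a - 1 := y_lt_a ha hab (hD.1 hcD)
    have hax : a * c.1 ≤ a * RR D c.2 := by nlinarith
    have hax1 : a * 1 ≤ a * c.1 := by nlinarith
    unfold g at h1 h2
    rw [Finset.mem_coe, Finset.mem_filter, Finset.mem_Icc]
    exact ⟨⟨hy1, hy2⟩, by nlinarith, by nlinarith⟩
  · intro y hy
    rw [Finset.mem_coe, Finset.mem_filter, Finset.mem_Icc] at hy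
    obtain ⟨⟨hy1, hy2⟩, h1, h2⟩ := hy
    set q0 := (a * b - a - b * y - t) / a with hq0
    have h0 : 0 ≤ a * b - a - b * y - t := by omega
    have hq0n : 0 ≤ q0 := Int.ediv_nonneg h0 (by omega)
    have hdm := Int.mul_ediv_add_emod (a * b - a - b * y - t) a
    have hm1 := Int.emod_nonneg (a * b - a - b * y - t) (by omega : a ≠ 0)
    have hm2 := Int.emod_lt_of_pos (a * b - a - b * y - t) ha0
    have hgv : g a b (q0 + 1, y) = t + (a * b - a - b * y - t) % a := by
      unfold g; simp only; linarith [hdm]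
    have hqR : q0 + 1 ≤ RR D y := by
      have : a * q0 < a * RR D y := by nlinarith
      nlinarith
    rw [Finset.mem_coe, Finset.mem_filter, hDF]
    refine ⟨(mem_row hD ha hab (q0 + 1, y)).2 ⟨by omega, by simpa using hqR⟩, ?_, ?_⟩
    · rw [hgv]; omega
    · rw [hgv]; omega
  · intro c hc
    rw [Finset.mem_coe, Finset.mem_filter] at hc
    obtain ⟨hcD, h1, h2⟩ := hc
    rw [hDF] at hcD
    have hx1 : 1 ≤ c.1 := ((mem_row hD ha hab c).1 hcD).1
    unfold g at h1 h2
    have hnum : a * b - a - b * c.2 - t = (a * b - a * c.1 - b * c.2 - t) + a * (c.1 - 1) := by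
      ring
    have hdiv : (a * b - a - b * c.2 - t) / a = c.1 - 1 := by
      rw [hnum, mul_comm a (c.1 - 1), Int.add_mul_ediv_right _ _ (by omega : a ≠ 0),
        Int.ediv_eq_zero_of_lt (by omega) (by omega)]
      omega
    rw [Prod.ext_iff]
    constructor
    · simp only [hdiv]; omega
    · rfl
  · intro y _
    rfl

lemma E0inner (hD : IsSubdiagram a b D) (ha : 1 < a) (hab : a < b) (hcop : IsCoprime a b)
    {y : ℤ} (hy1 : 1 ≤ y) (hy2 : y ≤ a - 1) :
    ∑ x ∈ Finset.Icc (1 : ℤ) (2 * b),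
      (if a * (x - 1 - RR D y) < b * y ∧ b * y ≤ a * (x - 1) then (1 : ℤ) else 0)
      = RR D y := by
  classical
  have ha0 : (0 : ℤ) < a := by omega
  have hb0 : (0 : ℤ) < b := by omega
  obtain ⟨hq1, hq2⟩ := qbounds ha (by omega) hcop hy1 (by omega)
  set m := b * y / a with hm
  have hmn : 0 ≤ m := Int.ediv_nonneg (by positivity) (by omega)
  have hmb : m ≤ b - 1 := by
    by_contra h
    push_neg at h
    have h1 : a * b ≤ a * m := by nlinarith
    have h2 : b * y ≤ b * (a - 1) := by nlinarith
    nlinarith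
  have hRR1 := RR_nonneg D y
  have hRR2 := RR_le hD ha hab y
  have hfil : (Finset.Icc (1 : ℤ) (2 * b)).filter
      (fun x => a * (x - 1 - RR D y) < b * y ∧ b * y ≤ a * (x - 1))
      = Finset.Icc (m + 2) (m + RR D y + 1) := by
    ext x
    rw [Finset.mem_filter, Finset.mem_Icc, Finset.mem_Icc]
    constructor
    · rintro ⟨⟨hx1, hx2⟩, hP1, hP2⟩
      constructor
      · nlinarith
      · nlinarith
    · rintro ⟨h1, h2⟩
      have hP2 : b * y ≤ a * (x - 1) := by nlinarith
      have hP1 : a * (x - 1 - RR D y) < b * y := by nlinarith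
      exact ⟨⟨by omega, by omega⟩, hP1, hP2⟩
  rw [Finset.sum_boole, hfil, Int.card_Icc]
  omega

lemma cardDF (hD : IsSubdiagram a b D) (ha : 1 < a) (hab : a < b)
    (DF : Finset (ℤ × ℤ)) (hDF : ∀ c, c ∈ DF ↔ c ∈ D) :
    (DF.card : ℤ) = ∑ y ∈ Finset.Icc (1 : ℤ) (a - 1), RR D y := by
  classical
  rw [Finset.card_eq_sum_card_fiberwise
    (f := Prod.snd) (t := Finset.Icc (1 : ℤ) (a - 1)) (fun c hc => by
      rw [Finset.mem_coe, hDF] at hc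
      rw [Finset.mem_coe, Finset.mem_Icc]
      exact ⟨((mem_col hD ha hab c).1 hc).1, y_lt_a ha hab (hD.1 hc)⟩)]
  push_cast
  apply Finset.sum_congr rfl
  intro y _
  have hcard : (DF.filter (fun c => c.2 = y)).card
      = (Finset.Icc (1 : ℤ) (RR D y)).card := by
    apply Finset.card_nbij' (fun c => c.1) (fun x => (x, y))
    · intro c hc
      rw [Finset.mem_coe, Finset.mem_filter] at hc
      rw [Finset.mem_coe, Finset.mem_Icc]
      obtain ⟨hcD, hcy⟩ := hc
      rw [hDF] at hcD
      have := (mem_row hD ha hab c).1 hcD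
      rw [hcy] at this
      exact this
    · intro x hx
      rw [Finset.mem_coe, Finset.mem_Icc] at hx
      rw [Finset.mem_coe, Finset.mem_filter, hDF]
      exact ⟨(mem_row hD ha hab (x, y)).2 (by simpa using hx), rfl⟩
    · intro c hc
      rw [Finset.mem_coe, Finset.mem_filter] at hc
      rw [Prod.ext_iff]
      exact ⟨rfl, hc.2.symm⟩
    · intro x _
      rfl
  rw [hcard, Int.card_Icc]
  have := RR_nonneg D y
  omega

lemma mem_row' (hD : IsSubdiagram a b D) (ha : 1 < a) (hab : a < b) (x y : ℤ) :
    (x, y) ∈ D ↔ 1 ≤ x ∧ x ≤ RR D y := mem_row hD ha hab (x, y)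

lemma mem_col' (hD : IsSubdiagram a b D) (ha : 1 < a) (hab : a < b) (x y : ℤ) :
    (x, y) ∈ D ↔ 1 ≤ y ∧ y ≤ HH D x := mem_col hD ha hab (x, y)

lemma E2 (hD : IsSubdiagram a b D) (ha : 1 < a) (hab : a < b) (hcop : IsCoprime a b)
    (DF : Finset (ℤ × ℤ)) (hDF : ∀ c, c ∈ DF ↔ c ∈ D) :
    (((Finset.Icc (1 : ℤ) (2 * b)) ×ˢ (Finset.Icc (1 : ℤ) (a - 1))).filter
        (fun c => (a * (c.1 - 1 - RR D c.2) < b * (c.2 - HH D c.1)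
          ∧ b * (c.2 - HH D c.1) ≤ a * (c.1 - 1)) ∧ HH D c.1 < c.2)).card
      = (DF.filter (fun c => a * (RR D c.2 - c.1) < b * (HH D c.1 - c.2 + 1))).card := by
  classical
  have ha0 : (0 : ℤ) < a := by omega
  have hb0 : (0 : ℤ) < b := by omega
  apply Finset.card_nbij'
    (fun c => (c.1 - (b * (c.2 - HH D c.1) / a + 1),
       HH D (c.1 - (b * (c.2 - HH D c.1) / a + 1)) + 1 - (c.2 - HH D c.1)))
    (fun c => (c.1 + (b * (HH D c.1 + 1 - c.2) / a + 1),
       HH D (c.1 + (b * (HH D c.1 + 1 - c.2) / a + 1)) + (HH D c.1 + 1 - c.2)))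
  · -- forward membership
    rintro ⟨x, y⟩ hc
    dsimp only
    rw [Finset.mem_coe, Finset.mem_filter, Finset.mem_product, Finset.mem_Icc, Finset.mem_Icc] at hc
    obtain ⟨⟨⟨hx1, hx2⟩, hy1, hy2⟩, ⟨hP1, hP2⟩, hHy⟩ := hc
    simp only at hP1 hP2 hHy
    have hH0 := HH_nonneg D x
    obtain ⟨hq1, hq2⟩ := qbounds ha (by omega) hcop
      (show 1 ≤ y - HH D x by omega) (show y - HH D x < a by omega)
    obtain ⟨K, hK⟩ : ∃ K, K = b * (y - HH D x) / a := ⟨_, rfl⟩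
    rw [← hK] at hq1 hq2
    have hxq : K + 1 < x := by
      have := lt_of_mul_lt_mul_left (show a * K < a * (x - 1) by linarith) ha0.le
      omega
    have hx'R : x - (K + 1) ≤ RR D y := by
      have := lt_of_mul_lt_mul_left
        (show a * (x - 1 - RR D y) < a * (K + 1) by linarith) ha0.le
      omega
    have hmem1 : (x - (K + 1), y) ∈ D := (mem_row' hD ha hab _ _).2 ⟨by omega, hx'R⟩
    have hyH : y ≤ HH D (x - (K + 1)) := ((mem_col' hD ha hab _ _).1 hmem1).2
    have hmem2 : (x - (K + 1), HH D (x - (K + 1)) + 1 - (y - HH D x)) ∈ D :=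
      (mem_col' hD ha hab _ _).2 ⟨by omega, by omega⟩
    have hRy' : RR D (HH D (x - (K + 1)) + 1 - (y - HH D x)) < x := by
      by_contra h
      push_neg at h
      have hm : (x, HH D (x - (K + 1)) + 1 - (y - HH D x)) ∈ D :=
        (mem_row' hD ha hab _ _).2 ⟨by omega, h⟩
      have := ((mem_col' hD ha hab _ _).1 hm).2
      omega
    have hmul : a * RR D (HH D (x - (K + 1)) + 1 - (y - HH D x)) ≤ a * (x - 1) :=
      mul_le_mul_of_nonneg_left (by omega) ha0.le
    rw [Finset.mem_coe, Finset.mem_filter, hDF]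
    refine ⟨by rw [← hK]; exact hmem2, ?_⟩
    show a * (RR D (HH D (x - (b * (y - HH D x) / a + 1)) + 1 - (y - HH D x))
        - (x - (b * (y - HH D x) / a + 1)))
      < b * (HH D (x - (b * (y - HH D x) / a + 1))
        - (HH D (x - (b * (y - HH D x) / a + 1)) + 1 - (y - HH D x)) + 1)
    rw [← hK]
    linarith
  · -- backward membership
    rintro ⟨x, y⟩ hc
    dsimp only
    rw [Finset.mem_coe, Finset.mem_filter, hDF] at hc
    obtain ⟨hcD, hP⟩ := hc
    simp only at hP
    obtain ⟨hx1, hx2⟩ := (mem_row' hD ha hab _ _).1 hcD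
    obtain ⟨hy1, hy2⟩ := (mem_col' hD ha hab _ _).1 hcD
    have hxb : x ≤ b - 1 := x_lt_b ha hab (hD.1 hcD)
    have hHa : HH D x ≤ a - 1 := HH_le hD ha hab x
    obtain ⟨hq1, hq2⟩ := qbounds ha (by omega) hcop
      (show 1 ≤ HH D x + 1 - y by omega) (show HH D x + 1 - y < a by omega)
    obtain ⟨K, hK⟩ : ∃ K, K = b * (HH D x + 1 - y) / a := ⟨_, rfl⟩
    rw [← hK] at hq1 hq2
    have hK0 : 0 ≤ K := by
      rw [hK]
      exact Int.ediv_nonneg (by nlinarith) ha0.le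
    have hKb : K + 1 ≤ b := by
      have h2 : b * (HH D x + 1 - y) ≤ b * (a - 1) :=
        mul_le_mul_of_nonneg_left (by omega) hb0.le
      have h3 : a * (K + 1) ≤ a * b := by linarith
      have := le_of_mul_le_mul_left h3 ha0
      omega
    have hRy' : RR D y < x + (K + 1) := by
      have := lt_of_mul_lt_mul_left
        (show a * (RR D y - x) < a * (K + 1) by linarith) ha0.le
      omega
    have hHxq : HH D (x + (K + 1)) < y := by
      by_contra h
      push_neg at h
      have hm : (x + (K + 1), y) ∈ D := (mem_col' hD ha hab _ _).2 ⟨hy1, h⟩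
      have := ((mem_row' hD ha hab _ _).1 hm).2
      omega
    have hHxq0 := HH_nonneg D (x + (K + 1))
    have hymem : (x, HH D (x + (K + 1)) + (HH D x + 1 - y)) ∈ D :=
      (mem_col' hD ha hab _ _).2 ⟨by omega, by omega⟩
    have hxR : x ≤ RR D (HH D (x + (K + 1)) + (HH D x + 1 - y)) :=
      ((mem_row' hD ha hab _ _).1 hymem).2
    have hmul : a * (x + (K + 1) - 1 - RR D (HH D (x + (K + 1)) + (HH D x + 1 - y)))
        ≤ a * K := mul_le_mul_of_nonneg_left (by omega) ha0.le
    rw [Finset.mem_coe, Finset.mem_filter, Finset.mem_product, Finset.mem_Icc, Finset.mem_Icc]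
    rw [← hK]
    refine ⟨⟨⟨by omega, by omega⟩, by omega, by omega⟩, ⟨?_, ?_⟩, ?_⟩
    rotate_right
    · show HH D (x + (K + 1)) < HH D (x + (K + 1)) + (HH D x + 1 - y)
      omega
    · show a * (x + (K + 1) - 1 - RR D (HH D (x + (K + 1)) + (HH D x + 1 - y)))
        < b * (HH D (x + (K + 1)) + (HH D x + 1 - y) - HH D (x + (K + 1)))
      linarith
    · show b * (HH D (x + (K + 1)) + (HH D x + 1 - y) - HH D (x + (K + 1)))
        ≤ a * (x + (K + 1) - 1)
      have h5 : a * 1 ≤ a * x := mul_le_mul_of_nonneg_left (by omega) ha0.le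
      linarith
  · -- left inverse
    rintro ⟨x, y⟩ _
    dsimp only
    simp only [sub_sub_cancel, sub_add_cancel]
    rw [Prod.mk.injEq]
    constructor <;> omega
  · -- right inverse
    rintro ⟨x, y⟩ _
    dsimp only
    simp only [add_sub_cancel_left, add_sub_cancel_right]
    rw [Prod.mk.injEq]
    constructor <;> omega

lemma key (hD : IsSubdiagram a b D) (ha : 1 < a) (hab : a < b) (hcop : IsCoprime a b)
    (DF : Finset (ℤ × ℤ)) (hDF : ∀ c, c ∈ DF ↔ c ∈ D) :
    ∑ i ∈ DF, ∑ j ∈ DF,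
      ((if 0 ≤ g a b j - g a b i ∧ g a b j - g a b i < a then (1 : ℤ) else 0) -
        (if b ≤ g a b j - g a b i ∧ g a b j - g a b i < a + b then (1 : ℤ) else 0))
      = ((DF.filter (fun c => b * (HH D c.1 - c.2) < a * (RR D c.2 - c.1 + 1)
          ∧ a * (RR D c.2 - c.1) < b * (HH D c.1 - c.2 + 1))).card : ℤ) := by
  classical
  have ha0 : (0 : ℤ) < a := by omega
  have hb0 : (0 : ℤ) < b := by omega
  set F : ℤ → ℤ := fun t => ∑ y ∈ Finset.Icc (1 : ℤ) (a - 1),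
    (if a * b - a * (RR D y + 1) - b * y < t ∧ t ≤ a * b - a - b * y then (1 : ℤ) else 0)
    with hF
  have hM : ∀ t : ℤ, ∑ j ∈ DF, (if g a b j - a < t ∧ t ≤ g a b j then (1 : ℤ) else 0)
      = F t := by
    intro t
    calc ∑ j ∈ DF, (if g a b j - a < t ∧ t ≤ g a b j then (1 : ℤ) else 0)
        = ∑ j ∈ DF, (if t ≤ g a b j ∧ g a b j < t + a then (1 : ℤ) else 0) :=
          Finset.sum_congr rfl (fun j _ => if_congr (by omega) rfl rfl)
      _ = ((DF.filter (fun j => t ≤ g a b j ∧ g a b j < t + a)).card : ℤ) :=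
          Finset.sum_boole _ _
      _ = (((Finset.Icc (1 : ℤ) (a - 1)).filter (fun y => a * b - a * (RR D y + 1) - b * y < t
            ∧ t ≤ a * b - a - b * y)).card : ℤ) := by
          rw [Mlemma hD ha hab DF hDF t]
      _ = F t := (Finset.sum_boole _ _).symm
  -- step 1: reduce to columns
  have step1 : ∑ i ∈ DF, ∑ j ∈ DF,
      ((if 0 ≤ g a b j - g a b i ∧ g a b j - g a b i < a then (1 : ℤ) else 0) -
        (if b ≤ g a b j - g a b i ∧ g a b j - g a b i < a + b then (1 : ℤ) else 0))
      = ∑ x ∈ Finset.Icc (1 : ℤ) (RR D 1),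
          (F (a * b - a * x - b * HH D x) - F (a * b - a * x)) := by
    rw [Finset.sum_comm]
    have hper : ∀ j ∈ DF,
        ∑ i ∈ DF, ((if 0 ≤ g a b j - g a b i ∧ g a b j - g a b i < a then (1 : ℤ) else 0) -
          (if b ≤ g a b j - g a b i ∧ g a b j - g a b i < a + b then (1 : ℤ) else 0))
        = ∑ x ∈ Finset.Icc (1 : ℤ) (RR D 1),
            ((if g a b j - a < a * b - a * x - b * HH D x
                ∧ a * b - a * x - b * HH D x ≤ g a b j then (1 : ℤ) else 0) -
             (if g a b j - a < a * b - a * x ∧ a * b - a * x ≤ g a b j then (1 : ℤ) else 0)) := by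
      intro j _
      have hstar := star hD ha hab DF hDF
        (fun t => if g a b j - a < t ∧ t ≤ g a b j then (1 : ℤ) else 0)
      rw [Finset.sum_sub_distrib, Finset.sum_sub_distrib]
      have e1 : ∑ i ∈ DF, (if 0 ≤ g a b j - g a b i ∧ g a b j - g a b i < a
          then (1 : ℤ) else 0)
          = ∑ i ∈ DF, (if g a b j - a < g a b i ∧ g a b i ≤ g a b j then (1 : ℤ) else 0) :=
        Finset.sum_congr rfl (fun i _ => if_congr (by omega) rfl rfl)
      have e2 : ∑ i ∈ DF, (if b ≤ g a b j - g a b i ∧ g a b j - g a b i < a + b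
          then (1 : ℤ) else 0)
          = ∑ i ∈ DF, (if g a b j - a < g a b i + b ∧ g a b i + b ≤ g a b j
            then (1 : ℤ) else 0) :=
        Finset.sum_congr rfl (fun i _ => if_congr (by omega) rfl rfl)
      rw [e1, e2]
      linarith [hstar]
    rw [Finset.sum_congr rfl hper, Finset.sum_comm]
    apply Finset.sum_congr rfl
    intro x _
    rw [Finset.sum_sub_distrib, hM, hM]
  rw [step1]
  -- step 2: extend column range to (Finset.Icc (1 : ℤ) (2 * b))
  have hsub : Finset.Icc (1 : ℤ) (RR D 1) ⊆ (Finset.Icc (1 : ℤ) (2 * b)) := by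
    intro x hx
    rw [Finset.mem_Icc] at hx ⊢
    have := RR_le hD ha hab 1
    omega
  have step2 : ∑ x ∈ Finset.Icc (1 : ℤ) (RR D 1),
      (F (a * b - a * x - b * HH D x) - F (a * b - a * x))
      = ∑ x ∈ (Finset.Icc (1 : ℤ) (2 * b)), (F (a * b - a * x - b * HH D x) - F (a * b - a * x)) := by
    apply Finset.sum_subset hsub
    intro x hx hnx
    rw [Finset.mem_Icc] at hnx hx
    have hH0 : HH D x = 0 := by
      have hHn := HH_nonneg D x
      rcases le_or_gt (HH D x) 0 with h | h
      · omega
      · exfalso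
        have : (x, 1) ∈ D := (mem_col' hD ha hab x 1).2 ⟨le_refl _, h⟩
        have := ((mem_row' hD ha hab x 1).1 this).2
        omega
    rw [show a * b - a * x - b * HH D x = a * b - a * x by rw [hH0]; ring, sub_self]
  rw [step2]
  -- step 3: rewrite conditions
  have step3 : ∑ x ∈ (Finset.Icc (1 : ℤ) (2 * b)), (F (a * b - a * x - b * HH D x) - F (a * b - a * x))
      = ∑ x ∈ (Finset.Icc (1 : ℤ) (2 * b)), ∑ y ∈ (Finset.Icc (1 : ℤ) (a - 1)),
          ((if (a * (x - 1 - RR D y) < b * (y - HH D x)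
              ∧ b * (y - HH D x) ≤ a * (x - 1)) ∧ y ≤ HH D x then (1 : ℤ) else 0)
           + (if (a * (x - 1 - RR D y) < b * (y - HH D x)
              ∧ b * (y - HH D x) ≤ a * (x - 1)) ∧ HH D x < y then (1 : ℤ) else 0)
           - (if a * (x - 1 - RR D y) < b * y ∧ b * y ≤ a * (x - 1) then (1 : ℤ) else 0)) := by
    apply Finset.sum_congr rfl
    intro x _
    rw [hF]
    simp only
    rw [← Finset.sum_sub_distrib]
    apply Finset.sum_congr rfl
    intro y _
    have e1 : (if a * b - a * (RR D y + 1) - b * y < a * b - a * x - b * HH D x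
        ∧ a * b - a * x - b * HH D x ≤ a * b - a - b * y then (1 : ℤ) else 0)
        = (if a * (x - 1 - RR D y) < b * (y - HH D x)
            ∧ b * (y - HH D x) ≤ a * (x - 1) then (1 : ℤ) else 0) :=
      if_congr (by constructor <;> rintro ⟨h1, h2⟩ <;>
        exact ⟨by linarith, by linarith⟩) rfl rfl
    have e2 : (if a * b - a * (RR D y + 1) - b * y < a * b - a * x
        ∧ a * b - a * x ≤ a * b - a - b * y then (1 : ℤ) else 0)
        = (if a * (x - 1 - RR D y) < b * y ∧ b * y ≤ a * (x - 1) then (1 : ℤ) else 0) :=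
      if_congr (by constructor <;> rintro ⟨h1, h2⟩ <;>
        exact ⟨by linarith, by linarith⟩) rfl rfl
    rw [e1, e2]
    congr 1
    rcases le_or_gt y (HH D x) with h | h
    · by_cases hC : (a * (x - 1 - RR D y) < b * (y - HH D x) ∧ b * (y - HH D x) ≤ a * (x - 1))
      · simp [hC, h, not_lt.2 h]
      · simp [hC]
    · by_cases hC : (a * (x - 1 - RR D y) < b * (y - HH D x) ∧ b * (y - HH D x) ≤ a * (x - 1))
      · simp [hC, h, not_le.2 h]
      · simp [hC]
  rw [step3]
  have hdist : ∑ x ∈ Finset.Icc (1 : ℤ) (2 * b), ∑ y ∈ Finset.Icc (1 : ℤ) (a - 1),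
      ((if (a * (x - 1 - RR D y) < b * (y - HH D x)
          ∧ b * (y - HH D x) ≤ a * (x - 1)) ∧ y ≤ HH D x then (1 : ℤ) else 0)
       + (if (a * (x - 1 - RR D y) < b * (y - HH D x)
          ∧ b * (y - HH D x) ≤ a * (x - 1)) ∧ HH D x < y then (1 : ℤ) else 0)
       - (if a * (x - 1 - RR D y) < b * y ∧ b * y ≤ a * (x - 1) then (1 : ℤ) else 0))
      = (∑ x ∈ Finset.Icc (1 : ℤ) (2 * b), ∑ y ∈ Finset.Icc (1 : ℤ) (a - 1),
          (if (a * (x - 1 - RR D y) < b * (y - HH D x)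
            ∧ b * (y - HH D x) ≤ a * (x - 1)) ∧ y ≤ HH D x then (1 : ℤ) else 0))
        + (∑ x ∈ Finset.Icc (1 : ℤ) (2 * b), ∑ y ∈ Finset.Icc (1 : ℤ) (a - 1),
          (if (a * (x - 1 - RR D y) < b * (y - HH D x)
            ∧ b * (y - HH D x) ≤ a * (x - 1)) ∧ HH D x < y then (1 : ℤ) else 0))
        - (∑ x ∈ Finset.Icc (1 : ℤ) (2 * b), ∑ y ∈ Finset.Icc (1 : ℤ) (a - 1),
          (if a * (x - 1 - RR D y) < b * y ∧ b * y ≤ a * (x - 1) then (1 : ℤ) else 0)) := by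
    rw [← Finset.sum_add_distrib, ← Finset.sum_sub_distrib]
    apply Finset.sum_congr rfl
    intro x _
    rw [← Finset.sum_add_distrib, ← Finset.sum_sub_distrib]
  rw [hdist]
  have hSA : (∑ x ∈ Finset.Icc (1 : ℤ) (2 * b), ∑ y ∈ Finset.Icc (1 : ℤ) (a - 1),
      (if (a * (x - 1 - RR D y) < b * (y - HH D x)
        ∧ b * (y - HH D x) ≤ a * (x - 1)) ∧ y ≤ HH D x then (1 : ℤ) else 0))
      = ((DF.filter (fun c => b * (HH D c.1 - c.2)
          < a * (RR D c.2 - c.1 + 1))).card : ℤ) := by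
    have hprod := Finset.sum_product (s := Finset.Icc (1 : ℤ) (2 * b))
      (t := Finset.Icc (1 : ℤ) (a - 1))
      (f := fun c : ℤ × ℤ => (if (a * (c.1 - 1 - RR D c.2) < b * (c.2 - HH D c.1)
        ∧ b * (c.2 - HH D c.1) ≤ a * (c.1 - 1)) ∧ c.2 ≤ HH D c.1 then (1 : ℤ) else 0))
    rw [← hprod, Finset.sum_boole]
    have hset : (((Finset.Icc (1 : ℤ) (2 * b)) ×ˢ (Finset.Icc (1 : ℤ) (a - 1))).filter
        (fun c => (a * (c.1 - 1 - RR D c.2) < b * (c.2 - HH D c.1)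
          ∧ b * (c.2 - HH D c.1) ≤ a * (c.1 - 1)) ∧ c.2 ≤ HH D c.1))
        = DF.filter (fun c => b * (HH D c.1 - c.2) < a * (RR D c.2 - c.1 + 1)) := by
      ext c
      rw [Finset.mem_filter, Finset.mem_filter, Finset.mem_product, Finset.mem_Icc,
        Finset.mem_Icc, hDF]
      constructor
      · rintro ⟨⟨⟨hx1, hx2⟩, hy1, hy2⟩, ⟨h1, h2⟩, h3⟩
        refine ⟨(mem_col hD ha hab c).2 ⟨hy1, h3⟩, by linarith⟩
      · rintro ⟨hcD, hP⟩
        obtain ⟨hy1, h3⟩ := (mem_col hD ha hab c).1 hcD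
        obtain ⟨hx1, hx2⟩ := (mem_row hD ha hab c).1 hcD
        have hxb : c.1 ≤ b - 1 := x_lt_b ha hab (hD.1 hcD)
        have hya : c.2 ≤ a - 1 := y_lt_a ha hab (hD.1 hcD)
        have u1 : 0 ≤ a * (c.1 - 1) := mul_nonneg ha0.le (by omega)
        have u2 : 0 ≤ b * (HH D c.1 - c.2) := mul_nonneg hb0.le (by omega)
        exact ⟨⟨⟨by omega, by omega⟩, by omega, by omega⟩,
          ⟨by linarith, by linarith⟩, h3⟩
    rw [hset]
  have hSB : (∑ x ∈ Finset.Icc (1 : ℤ) (2 * b), ∑ y ∈ Finset.Icc (1 : ℤ) (a - 1),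
      (if (a * (x - 1 - RR D y) < b * (y - HH D x)
        ∧ b * (y - HH D x) ≤ a * (x - 1)) ∧ HH D x < y then (1 : ℤ) else 0))
      = ((DF.filter (fun c => a * (RR D c.2 - c.1)
          < b * (HH D c.1 - c.2 + 1))).card : ℤ) := by
    have hprod := Finset.sum_product (s := Finset.Icc (1 : ℤ) (2 * b))
      (t := Finset.Icc (1 : ℤ) (a - 1))
      (f := fun c : ℤ × ℤ => (if (a * (c.1 - 1 - RR D c.2) < b * (c.2 - HH D c.1)
        ∧ b * (c.2 - HH D c.1) ≤ a * (c.1 - 1)) ∧ HH D c.1 < c.2 then (1 : ℤ) else 0))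
    rw [← hprod, Finset.sum_boole, E2 hD ha hab hcop DF hDF]
  have hSC : (∑ x ∈ Finset.Icc (1 : ℤ) (2 * b), ∑ y ∈ Finset.Icc (1 : ℤ) (a - 1),
      (if a * (x - 1 - RR D y) < b * y ∧ b * y ≤ a * (x - 1) then (1 : ℤ) else 0))
      = (DF.card : ℤ) := by
    rw [Finset.sum_comm, cardDF hD ha hab DF hDF]
    apply Finset.sum_congr rfl
    intro y hy
    rw [Finset.mem_Icc] at hy
    exact E0inner hD ha hab hcop hy.1 hy.2
  rw [hSA, hSB, hSC]
  have hcov : ∀ c ∈ DF, (b * (HH D c.1 - c.2) < a * (RR D c.2 - c.1 + 1))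
      ∨ (a * (RR D c.2 - c.1) < b * (HH D c.1 - c.2 + 1)) := by
    intro c _
    by_contra h
    push_neg at h
    obtain ⟨h1, h2⟩ := h
    linarith
  have hIE := Finset.card_union_add_card_inter
    (DF.filter (fun c => b * (HH D c.1 - c.2) < a * (RR D c.2 - c.1 + 1)))
    (DF.filter (fun c => a * (RR D c.2 - c.1) < b * (HH D c.1 - c.2 + 1)))
  rw [← Finset.filter_or, ← Finset.filter_and, Finset.filter_true_of_mem hcov] at hIE
  omega

theorem stmt10' (ha : 1 < a) (hab : a < b) (hcop : IsCoprime a b)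
    (hD : IsSubdiagram a b D) :
    Q a b (fun p => if p ∈ D then (1 : ℝ) else 0) =
      (Set.ncard {c : ℤ × ℤ | c ∈ D ∧
        b * (leg D c : ℤ) < a * ((arm D c : ℤ) + 1) ∧
        a * (arm D c : ℤ) < b * ((leg D c : ℤ) + 1)} : ℝ) ∧
    (D.Nonempty → 0 < Q a b (fun p => if p ∈ D then (1 : ℝ) else 0)) := by
  classical
  have hb0 : (0 : ℤ) < b := by omega
  have ha0 : (0 : ℤ) < a := by omega
  have hGfin := Gset_finite ha hab
  have hDfin : D.Finite := hGfin.subset hD.1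
  set DF := hDfin.toFinset with hDFd
  have hDF : ∀ c, c ∈ DF ↔ c ∈ D := fun c => hDfin.mem_toFinset
  have hsub : DF ⊆ hGfin.toFinset := by
    intro c hc
    rw [Set.Finite.mem_toFinset]
    exact hD.1 ((hDF c).1 hc)
  -- reduce Q to integer double sum
  have hQint : Q a b (fun p => if p ∈ D then (1 : ℝ) else 0)
      = ((∑ i ∈ DF, ∑ j ∈ DF,
          ((if 0 ≤ g a b j - g a b i ∧ g a b j - g a b i < a then (1 : ℤ) else 0) -
            (if b ≤ g a b j - g a b i ∧ g a b j - g a b i < a + b then (1 : ℤ) else 0)) : ℤ)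
          : ℝ) := by
    unfold Q
    rw [← hGfin.coe_toFinset]
    simp only [finsum_mem_coe_finset]
    rw [← Finset.sum_subset hsub (by
      intro i _ hni
      rw [hDF] at hni
      apply Finset.sum_eq_zero
      intro j _
      rw [if_neg hni]
      ring)]
    have hinner : ∀ i ∈ DF, (∑ j ∈ hGfin.toFinset,
        ((if 0 ≤ g a b j - g a b i ∧ g a b j - g a b i < a then (1 : ℝ) else 0) -
          (if b ≤ g a b j - g a b i ∧ g a b j - g a b i < a + b then (1 : ℝ) else 0)) *
          (if i ∈ D then (1 : ℝ) else 0) * (if j ∈ D then (1 : ℝ) else 0))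
        = ∑ j ∈ DF,
        ((if 0 ≤ g a b j - g a b i ∧ g a b j - g a b i < a then (1 : ℝ) else 0) -
          (if b ≤ g a b j - g a b i ∧ g a b j - g a b i < a + b then (1 : ℝ) else 0)) := by
      intro i hi
      rw [← Finset.sum_subset hsub (by
        intro j _ hnj
        rw [hDF] at hnj
        rw [if_neg hnj]
        ring)]
      apply Finset.sum_congr rfl
      intro j hj
      rw [if_pos ((hDF i).1 hi), if_pos ((hDF j).1 hj)]
      ring
    rw [Finset.sum_congr rfl hinner]
    push_cast
    apply Finset.sum_congr rfl
    intro i _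
    apply Finset.sum_congr rfl
    intro j _
    split_ifs <;> norm_num
  have hZ := key hD ha hab hcop DF hDF
  have hsetdinv : {c : ℤ × ℤ | c ∈ D ∧
      b * (leg D c : ℤ) < a * ((arm D c : ℤ) + 1) ∧
      a * (arm D c : ℤ) < b * ((leg D c : ℤ) + 1)}
      = ↑(DF.filter (fun c => b * (HH D c.1 - c.2) < a * (RR D c.2 - c.1 + 1)
          ∧ a * (RR D c.2 - c.1) < b * (HH D c.1 - c.2 + 1))) := by
    ext c
    simp only [Set.mem_setOf_eq, Finset.coe_filter, Finset.mem_coe, Finset.mem_filter, hDF]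
    constructor
    · rintro ⟨hcD, h1, h2⟩
      rw [arm_eq hD ha hab hcD, leg_eq hD ha hab hcD] at h1 h2
      exact ⟨hcD, h1, h2⟩
    · rintro ⟨hcD, h1, h2⟩
      rw [← arm_eq hD ha hab hcD, ← leg_eq hD ha hab hcD] at h1 h2
      exact ⟨hcD, h1, h2⟩
  have hmain : Q a b (fun p => if p ∈ D then (1 : ℝ) else 0) =
      (Set.ncard {c : ℤ × ℤ | c ∈ D ∧
        b * (leg D c : ℤ) < a * ((arm D c : ℤ) + 1) ∧
        a * (arm D c : ℤ) < b * ((leg D c : ℤ) + 1)} : ℝ) := by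
    rw [hQint, hZ, hsetdinv, Set.ncard_coe_finset]
    push_cast
    rfl
  refine ⟨hmain, fun hne => ?_⟩
  rw [hmain]
  obtain ⟨c0, hc0⟩ := hne
  obtain ⟨c, hc, hmax⟩ := Finset.exists_max_image DF Prod.fst ⟨c0, (hDF c0).2 hc0⟩
  have hcD : c ∈ D := (hDF c).1 hc
  obtain ⟨hy1, hy2⟩ := (mem_col hD ha hab c).1 hcD
  obtain ⟨hx1, hx2⟩ := (mem_row hD ha hab c).1 hcD
  have hmemtop : (c.1, HH D c.1) ∈ D :=
    (mem_col' hD ha hab c.1 (HH D c.1)).2 ⟨by omega, le_refl _⟩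
  have hR1 : c.1 ≤ RR D (HH D c.1) := ((mem_row' hD ha hab _ _).1 hmemtop).2
  have hR2 : RR D (HH D c.1) ≤ c.1 := by
    have hmem2 : (RR D (HH D c.1), HH D c.1) ∈ D :=
      (mem_row' hD ha hab _ _).2 ⟨by omega, le_refl _⟩
    exact hmax _ ((hDF _).2 hmem2)
  have hfilne : ((c.1, HH D c.1) : ℤ × ℤ) ∈ DF.filter
      (fun c => b * (HH D c.1 - c.2) < a * (RR D c.2 - c.1 + 1)
        ∧ a * (RR D c.2 - c.1) < b * (HH D c.1 - c.2 + 1)) := by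
    rw [Finset.mem_filter]
    refine ⟨(hDF _).2 hmemtop, ?_, ?_⟩
    · show b * (HH D c.1 - HH D c.1) < a * (RR D (HH D c.1) - c.1 + 1)
      have h3 : RR D (HH D c.1) - c.1 + 1 = 1 := by omega
      rw [h3]
      simp
      omega
    · show a * (RR D (HH D c.1) - c.1) < b * (HH D c.1 - HH D c.1 + 1)
      have h3 : RR D (HH D c.1) - c.1 = 0 := by omega
      rw [h3]
      simp
      omega
  rw [hsetdinv, Set.ncard_coe_finset]
  have hpos : 0 < (DF.filter
      (fun c => b * (HH D c.1 - c.2) < a * (RR D c.2 - c.1 + 1)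
        ∧ a * (RR D c.2 - c.1) < b * (HH D c.1 - c.2 + 1))).card :=
    Finset.card_pos.2 ⟨_, hfilne⟩
  exact_mod_cast hpos

end main

/-- Q(1_D) = dinv(D); moreover Q(1_D) > 0 when D ≠ ∅. -/
theorem stmt10 (a b : ℤ) (ha : 1 < a) (hab : a < b) (hcop : IsCoprime a b)
    (D : Set (ℤ × ℤ)) (hD : IsSubdiagram a b D) :
    Q a b (fun p => if p ∈ D then (1 : ℝ) else 0) =
      (Set.ncard {c : ℤ × ℤ | c ∈ D ∧
        b * (leg D c : ℤ) < a * ((arm D c : ℤ) + 1) ∧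
        a * (arm D c : ℤ) < b * ((leg D c : ℤ) + 1)} : ℝ) ∧
    (D.Nonempty → 0 < Q a b (fun p => if p ∈ D then (1 : ℝ) else 0)) :=
  stmt10' ha hab hcop hD
end

section
/- For subdiagrams D, E ⊆ G, the map Φ_{D,E} restricts to a bijection from the set of blue arrows N_b(D, U_E) = {(i,j) ∈ D × U_E : 0 ≤ g(j)−g(i) < a, j strictly northwest of i} onto D_b = {c ∈ D ∩ E : b(leg_E(c)+1) ≤ a·arm_D(c)}, where Φ_{D,E}(i,j) is the intersection of the row of i and the column of j. -/
/-!
A blue arrow `(i, j)` is determined by its corner `c = (j.1, i.2)`. Since `j` is the cell of `U_E`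
strictly above `c ∈ E` in its column, `j.2 - c.2 = leg_E(c) + 1 =: n`. The condition
`0 ≤ g(j) - g(i) < a` reads `0 ≤ a (i.1 - c.1) - b n < a`, which forces `i.1 - c.1 = ⌈b n / a⌉`,
and `i ∈ D` then amounts to `⌈b n / a⌉ ≤ arm_D(c)`, that is, `b n ≤ a · arm_D(c)`.
-/

/-- `N_b(D, U_E)`. -/
def blueArrows (a b : ℤ) (D E : Set (ℤ × ℤ)) : Set ((ℤ × ℤ) × (ℤ × ℤ)) :=
  {p | p.1 ∈ D ∧ p.2 ∈ U E ∧ 0 ≤ g a b p.2 - g a b p.1 ∧ g a b p.2 - g a b p.1 < a ∧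
    p.2.1 < p.1.1 ∧ p.1.2 < p.2.2}

/-- `D_b`. -/
def blueCells (a b : ℤ) (D E : Set (ℤ × ℤ)) : Set (ℤ × ℤ) :=
  {c | c ∈ D ∧ c ∈ E ∧ b * ((leg E c : ℤ) + 1) ≤ a * (arm D c : ℤ)}

/-- `Φ_{D,E}`. -/
def arrowCorner (p : (ℤ × ℤ) × (ℤ × ℤ)) : ℤ × ℤ := (p.2.1, p.1.2)

section Ceil

variable {a : ℤ}

theorem exists_mul_sub_mem_Ico (ha : 0 < a) (x : ℤ) : ∃ m, 0 ≤ a * m - x ∧ a * m - x < a := by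
  refine ⟨-(-x / a), ?_⟩
  have := Int.mul_ediv_add_emod (-x) a
  have := Int.emod_nonneg (-x) ha.ne'
  have := Int.emod_lt_of_pos (-x) ha
  constructor <;> linarith

variable {x m : ℤ}

theorem eq_of_mul_sub_mem_Ico {m' : ℤ} (h₀ : 0 ≤ a * m - x) (h₁ : a * m - x < a)
    (h₀' : 0 ≤ a * m' - x) (h₁' : a * m' - x < a) : m = m' := by
  have ha : 0 < a := by linarith
  have : m - m' < 1 := lt_of_mul_lt_mul_left (by linarith) ha.le
  have : m' - m < 1 := lt_of_mul_lt_mul_left (by linarith) ha.le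
  omega

theorem le_iff_le_mul_of_mul_sub_mem_Ico (A : ℤ) (h₀ : 0 ≤ a * m - x) (h₁ : a * m - x < a) :
    m ≤ A ↔ x ≤ a * A := by
  have ha : 0 < a := by linarith
  constructor
  · intro hm
    linarith [mul_le_mul_of_nonneg_left hm ha.le]
  · intro hx
    have : m < A + 1 := lt_of_mul_lt_mul_left (by linarith) ha.le
    omega

end Ceil

theorem Nat.le_sSup_iff_mem_of_isLowerSet {S : Set ℕ} (hne : S.Nonempty) (hS : BddAbove S)
    (hlow : IsLowerSet S) {k : ℕ} : k ≤ sSup S ↔ k ∈ S :=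
  ⟨fun hk => hlow hk (Nat.sSup_mem hne hS), fun hk => le_csSup hS hk⟩

section Subdiagram

variable {a b : ℤ} {D : Set (ℤ × ℤ)}

theorem fst_lt_of_mem_Gset (ha : 0 < a) (hb : 0 < b) {p : ℤ × ℤ} (hp : p ∈ Gset a b) :
    p.1 < b := by
  obtain ⟨-, h₂, hg⟩ := hp
  unfold g at hg
  nlinarith

theorem snd_lt_of_mem_Gset (ha : 0 < a) (hb : 0 < b) {p : ℤ × ℤ} (hp : p ∈ Gset a b) :
    p.2 < a := by
  obtain ⟨h₁, -, hg⟩ := hp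
  unfold g at hg
  nlinarith

theorem IsSubdiagram.mem_of_le (ha : 0 ≤ a) (hb : 0 ≤ b) (hD : IsSubdiagram a b D)
    {p q : ℤ × ℤ} (hp : p ∈ D) (hq₁ : 1 ≤ q.1) (hq₂ : 1 ≤ q.2) (h₁ : q.1 ≤ p.1)
    (h₂ : q.2 ≤ p.2) : q ∈ D := by
  refine hD.2 p hp q ⟨hq₁, hq₂, ?_⟩ h₁ h₂
  have := (hD.1 hp).2.2
  unfold g at *
  nlinarith

theorem IsSubdiagram.mem_row_iff_le_arm (ha : 0 < a) (hb : 0 < b) (hD : IsSubdiagram a b D)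
    {c : ℤ × ℤ} (hc : c ∈ D) {x : ℤ} (hx : c.1 ≤ x) :
    (x, c.2) ∈ D ↔ x ≤ c.1 + arm D c := by
  have hS : BddAbove {k : ℕ | (c.1 + (k : ℤ), c.2) ∈ D} :=
    ⟨(b - c.1).toNat, fun k hk => by have := fst_lt_of_mem_Gset ha hb (hD.1 hk); omega⟩
  have key := Nat.le_sSup_iff_mem_of_isLowerSet ⟨0, by simpa using hc⟩ hS
    (fun k j hjk hk => hD.mem_of_le ha.le hb.le hk (by have := (hD.1 hc).1; omega)
      (hD.1 hc).2.1 (by simp only; omega) le_rfl) (k := (x - c.1).toNat)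
  simp only [Set.mem_ofPred_eq, Int.ofNat_toNat, max_eq_left (sub_nonneg.2 hx),
    add_sub_cancel] at key
  rw [← key, arm]
  omega

theorem IsSubdiagram.mem_column_iff_le_leg (ha : 0 < a) (hb : 0 < b) (hD : IsSubdiagram a b D)
    {c : ℤ × ℤ} (hc : c ∈ D) {y : ℤ} (hy : c.2 ≤ y) :
    (c.1, y) ∈ D ↔ y ≤ c.2 + leg D c := by
  have hS : BddAbove {k : ℕ | (c.1, c.2 + (k : ℤ)) ∈ D} :=
    ⟨(a - c.2).toNat, fun k hk => by have := snd_lt_of_mem_Gset ha hb (hD.1 hk); omega⟩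
  have key := Nat.le_sSup_iff_mem_of_isLowerSet ⟨0, by simpa using hc⟩ hS
    (fun k j hjk hk => hD.mem_of_le ha.le hb.le hk (hD.1 hc).1
      (by have := (hD.1 hc).2.1; omega) le_rfl (by simp only; omega)) (k := (y - c.2).toNat)
  simp only [Set.mem_ofPred_eq, Int.ofNat_toNat, max_eq_left (sub_nonneg.2 hy),
    add_sub_cancel] at key
  rw [← key, leg]
  omega

theorem IsSubdiagram.mem_U_and_lt_iff (ha : 0 < a) (hb : 0 < b) (hD : IsSubdiagram a b D)
    {c : ℤ × ℤ} (hc : c ∈ D) {y : ℤ} :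
    (c.1, y) ∈ U D ∧ c.2 < y ↔ y = c.2 + leg D c + 1 := by
  have hc₂ := (hD.1 hc).2.1
  constructor
  · rintro ⟨⟨hnot, hbelow | hbelow⟩, hlt⟩
    · rw [hD.mem_column_iff_le_leg ha hb hc (by omega)] at hnot
      have := (hD.mem_column_iff_le_leg ha hb hc (by simp only; omega)).1 hbelow
      simp only at this
      omega
    · simp only at hbelow
      omega
  · rintro rfl
    refine ⟨⟨?_, Or.inl ?_⟩, by omega⟩
    · rw [hD.mem_column_iff_le_leg ha hb hc (by omega)]
      omega
    · exact (hD.mem_column_iff_le_leg ha hb hc (by simp only; omega)).2 (by simp only; omega)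

end Subdiagram

section BlueArrows

variable {a b : ℤ} {D E : Set (ℤ × ℤ)}

theorem g_sub_g_s12 (i j : ℤ × ℤ) : g a b j - g a b i = a * (i.1 - j.1) - b * (j.2 - i.2) := by
  unfold g
  ring

theorem arrowCorner_mem_of_mem_blueArrows (ha : 0 < a) (hb : 0 < b) (hD : IsSubdiagram a b D)
    (hE : IsSubdiagram a b E) {p : (ℤ × ℤ) × (ℤ × ℤ)} (hp : p ∈ blueArrows a b D E) :
    arrowCorner p ∈ D ∧ arrowCorner p ∈ E ∧ p.2.2 = p.1.2 + leg E (arrowCorner p) + 1 := by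
  obtain ⟨⟨i₁, i₂⟩, ⟨j₁, j₂⟩⟩ := p
  obtain ⟨hi, hj, -, -, hji, hij⟩ := hp
  simp only [arrowCorner] at *
  obtain ⟨-, hi₂, -⟩ := hD.1 hi
  have hbelow : (j₁, j₂ - 1) ∈ E := hj.2.resolve_right (by simp only; omega)
  have hcD : (j₁, i₂) ∈ D := hD.mem_of_le ha.le hb.le hi (hE.1 hbelow).1 hi₂ hji.le le_rfl
  have hcE : (j₁, i₂) ∈ E :=
    hE.mem_of_le ha.le hb.le hbelow (hE.1 hbelow).1 hi₂ le_rfl (by simp only; omega)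
  exact ⟨hcD, hcE, (hE.mem_U_and_lt_iff ha hb hcE).1 ⟨hj, hij⟩⟩

theorem mapsTo_arrowCorner (ha : 0 < a) (hb : 0 < b) (hD : IsSubdiagram a b D)
    (hE : IsSubdiagram a b E) :
    Set.MapsTo arrowCorner (blueArrows a b D E) (blueCells a b D E) := by
  intro p hp
  obtain ⟨hcD, hcE, hn⟩ := arrowCorner_mem_of_mem_blueArrows ha hb hD hE hp
  obtain ⟨hi, -, h₀, h₁, hji, -⟩ := hp
  rw [g_sub_g_s12, hn] at h₀ h₁
  have harm : p.1.1 ≤ p.2.1 + arm D (arrowCorner p) :=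
    (hD.mem_row_iff_le_arm ha hb hcD hji.le).1 hi
  refine ⟨hcD, hcE, (le_iff_le_mul_of_mul_sub_mem_Ico _ ?_ ?_).1 (by omega : p.1.1 - p.2.1 ≤ _)⟩
    <;> linarith

theorem injOn_arrowCorner (ha : 0 < a) (hb : 0 < b) (hD : IsSubdiagram a b D)
    (hE : IsSubdiagram a b E) : Set.InjOn arrowCorner (blueArrows a b D E) := by
  intro p hp p' hp' hc
  obtain ⟨-, -, hn⟩ := arrowCorner_mem_of_mem_blueArrows ha hb hD hE hp
  obtain ⟨-, -, hn'⟩ := arrowCorner_mem_of_mem_blueArrows ha hb hD hE hp'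
  rw [← hc] at hn'
  simp only [arrowCorner, Prod.mk.injEq] at hc
  obtain ⟨hcol, hrow⟩ := hc
  have hj₂ : p.2.2 = p'.2.2 := by omega
  obtain ⟨-, -, h₀, h₁, -, -⟩ := hp
  obtain ⟨-, -, h₀', h₁', -, -⟩ := hp'
  rw [g_sub_g_s12, ← hcol, ← hrow, ← hj₂] at h₀' h₁'
  rw [g_sub_g_s12] at h₀ h₁
  have hi₁ : p.1.1 = p'.1.1 := by
    have := eq_of_mul_sub_mem_Ico (m := p.1.1 - p.2.1) h₀ h₁ h₀' h₁'
    omega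
  exact Prod.ext (Prod.ext hi₁ hrow) (Prod.ext hcol hj₂)

theorem surjOn_arrowCorner (ha : 0 < a) (hb : 0 < b) (hD : IsSubdiagram a b D)
    (hE : IsSubdiagram a b E) :
    Set.SurjOn arrowCorner (blueArrows a b D E) (blueCells a b D E) := by
  rintro c ⟨hcD, hcE, hineq⟩
  obtain ⟨m, h₀, h₁⟩ := exists_mul_sub_mem_Ico ha (b * ((leg E c : ℤ) + 1))
  have hm_arm : m ≤ arm D c := (le_iff_le_mul_of_mul_sub_mem_Ico _ h₀ h₁).2 hineq
  have hm_pos : 0 < m := pos_of_mul_pos_right (by nlinarith) ha.le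
  refine ⟨((c.1 + m, c.2), (c.1, c.2 + leg E c + 1)), ⟨?_, ?_, ?_, ?_, ?_, ?_⟩, rfl⟩
  · exact (hD.mem_row_iff_le_arm ha hb hcD (by omega)).2 (by omega)
  · exact ((hE.mem_U_and_lt_iff ha hb hcE).2 rfl).1
  all_goals simp only [g_sub_g_s12]; linarith

end BlueArrows

theorem bijOn_arrowCorner {a b : ℤ} {D E : Set (ℤ × ℤ)} (ha : 0 < a) (hb : 0 < b)
    (hD : IsSubdiagram a b D) (hE : IsSubdiagram a b E) :
    Set.BijOn arrowCorner (blueArrows a b D E) (blueCells a b D E) :=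
  ⟨mapsTo_arrowCorner ha hb hD hE, injOn_arrowCorner ha hb hD hE, surjOn_arrowCorner ha hb hD hE⟩

theorem stmt12_general (a b : ℤ) (ha : 1 < a) (hab : a < b)
    (D E : Set (ℤ × ℤ)) (hD : IsSubdiagram a b D) (hE : IsSubdiagram a b E) :
    Set.BijOn (fun p : (ℤ × ℤ) × (ℤ × ℤ) => (p.2.1, p.1.2))
      {p : (ℤ × ℤ) × (ℤ × ℤ) | p.1 ∈ D ∧ p.2 ∈ U E ∧
        0 ≤ g a b p.2 - g a b p.1 ∧ g a b p.2 - g a b p.1 < a ∧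
        p.2.1 < p.1.1 ∧ p.1.2 < p.2.2}
      {c : ℤ × ℤ | c ∈ D ∧ c ∈ E ∧
        b * ((leg E c : ℤ) + 1) ≤ a * (arm D c : ℤ)} :=
  bijOn_arrowCorner (by omega) (by omega) hD hE

/-- Φ_{D,E} : (i,j) ↦ (column of j, row of i) is a bijection from
the blue arrows N_b(D, U_E) onto D_b = {c ∈ D ∩ E : b(leg_E(c)+1) ≤ a·arm_D(c)}. -/
theorem stmt12 (a b : ℤ) (ha : 1 < a) (hab : a < b) (hcop : IsCoprime a b)
    (D E : Set (ℤ × ℤ)) (hD : IsSubdiagram a b D) (hE : IsSubdiagram a b E) :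
    Set.BijOn (fun p : (ℤ × ℤ) × (ℤ × ℤ) => (p.2.1, p.1.2))
      {p : (ℤ × ℤ) × (ℤ × ℤ) | p.1 ∈ D ∧ p.2 ∈ U E ∧
        0 ≤ g a b p.2 - g a b p.1 ∧ g a b p.2 - g a b p.1 < a ∧
        p.2.1 < p.1.1 ∧ p.1.2 < p.2.2}
      {c : ℤ × ℤ | c ∈ D ∧ c ∈ E ∧
        b * ((leg E c : ℤ) + 1) ≤ a * (arm D c : ℤ)} :=
  stmt12_general a b ha hab D E hD hE
end
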